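/- arXiv:2007.10197 — 2 statements merged into one kernel-verified Lean document; each statement's English description precedes it below -/
import Mathlib

section
/- Let σ be a linear automorphism of V and let (δ_{i,r}, δ_{i,l})_{i≥1} and (δ'_{i,r}, δ'_{i,l})_{i≥1} both satisfy the sequence-pair recurrence for σ. Then for every integer i ≥ 1, ∑_{j=0}^{i−1} (−1)^j ((δ_{i−j,r} − δ'_{i−j,r}) ⊗ id_V^{⊗j}) = (−1)^{i+1} (δ_{i,l} − δ'_{i,l}) − ∑_{j=1}^{i−1} (−1)^j (σ ⊗ (δ_{i−j,r} − δ'_{i−j,r}) ⊗ id_V^{⊗(j−1)}) as linear maps V^{⊗i} → V^{⊗(i+1)}. -/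
/-!
The recurrence is linear in the pair, so the differences `D i = δ_{i,r} - δ'_{i,r}` and
`E i = δ_{i,l} - δ'_{i,l}` satisfy it as well, and the claim becomes `R i + S i = (-1)^(i+1) E i`
for the alternating sums `R i = ∑_{j<i} (-1)^j D (i-j) ⊗ id^{⊗j}` (`paddedAltSum`) and
`S i = ∑_{j<i-1} (-1)^(j+1) σ ⊗ D (i-j-1) ⊗ id^{⊗j}` (`sigmaPaddedAltSum`). Splitting off the `j = 0` terms gives
`R (i+1) = D (i+1) - R i ⊗ id` and `S (i+1) = -σ ⊗ D i - S i ⊗ id`, so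
`R (i+1) + S (i+1) = D (i+1) - σ ⊗ D i - (R i + S i) ⊗ id`, and the recurrence at `i + 1`
carries `R i + S i = (-1)^(i+1) E i` over to `i + 1`, starting from `D 1 = E 1`.
-/

open scoped TensorProduct
open PiTensorProduct

namespace OrePaper

variable (k : Type*) [Field k] (V : Type*) [AddCommGroup V] [Module k V]

/-- The canonical isomorphism `V^{⊗a} ⊗ V^{⊗b} ≃ V^{⊗(a+b)}`. -/
noncomputable abbrev mulPow (a b : ℕ) :
    ((⨂[k]^a V) ⊗[k] (⨂[k]^b V)) ≃ₗ[k] ⨂[k]^(a+b) V :=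
  TensorPower.mulEquiv

variable {k V}

/-- `f ⊗ g` for linear maps between tensor powers, under the canonical identifications. -/
noncomputable def tmap {a b c d : ℕ} (f : (⨂[k]^a V) →ₗ[k] ⨂[k]^c V)
    (g : (⨂[k]^b V) →ₗ[k] ⨂[k]^d V) :
    (⨂[k]^(a+b) V) →ₗ[k] ⨂[k]^(c+d) V :=
  (mulPow k V c d).toLinearMap ∘ₗ TensorProduct.map f g ∘ₗ (mulPow k V a b).symm.toLinearMap

/-- Transport a linear map between tensor powers along equalities of exponents
(the canonical associativity identifications). -/
noncomputable def conv {a b a' b' : ℕ} (h1 : a = a') (h2 : b = b')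
    (f : (⨂[k]^a V) →ₗ[k] ⨂[k]^b V) : (⨂[k]^a' V) →ₗ[k] ⨂[k]^b' V :=
  (TensorPower.cast k V h2).toLinearMap ∘ₗ f ∘ₗ (TensorPower.cast k V h1.symm).toLinearMap

/-- `f^{⊗n}` for a linear endomorphism `f` of `V`. -/
noncomputable def pmap (f : V →ₗ[k] V) (n : ℕ) : (⨂[k]^n V) →ₗ[k] ⨂[k]^n V :=
  PiTensorProduct.map (fun _ => f)

/-- A family `(δ_{i,r}, δ_{i,l})_{i ≥ 1}` of linear maps
`δ_{i,r} : V^{⊗i} → V^{⊗i} ⊗ V` and `δ_{i,l} : V^{⊗i} → V ⊗ V^{⊗i}` (written, under the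
canonical identifications, as maps `V^{⊗i} → V^{⊗(i+1)}`) satisfies the *sequence-pair
recurrence* for a linear automorphism `σ` of `V` if `δ_{1,r} = δ_{1,l}` and, for all `i ≥ 2`,
`δ_{i,r} + (-1)^i δ_{i,l} = σ ⊗ δ_{i-1,r} + (-1)^i (δ_{i-1,l} ⊗ id_V)`. -/
def SeqPairRec (σ : V ≃ₗ[k] V)
    (δr δl : (i : ℕ) → (⨂[k]^i V) →ₗ[k] ⨂[k]^(i+1) V) : Prop :=
  δr 1 = δl 1 ∧
  ∀ (i : ℕ) (hi : 2 ≤ i),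
    δr i + ((-1 : k)^i) • δl i
      = conv (by omega) (by omega) (tmap (pmap σ.toLinearMap 1) (δr (i-1)))
        + ((-1 : k)^i) • conv (by omega) (by omega) (tmap (δl (i-1)) (pmap (LinearMap.id) 1))


theorem conv_refl {a b : ℕ} (h1 : a = a) (h2 : b = b) (f : (⨂[k]^a V) →ₗ[k] ⨂[k]^b V) :
    conv h1 h2 f = f := by
  simp [conv]

theorem conv_sub {a b a' b' : ℕ} (h1 : a = a') (h2 : b = b')
    (f g : (⨂[k]^a V) →ₗ[k] ⨂[k]^b V) :
    conv h1 h2 (f - g) = conv h1 h2 f - conv h1 h2 g := by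
  simp [conv, LinearMap.sub_comp, LinearMap.comp_sub]

variable (k V) in
noncomputable def tmapBilinear (a b c d : ℕ) :
    ((⨂[k]^a V) →ₗ[k] ⨂[k]^c V) →ₗ[k] ((⨂[k]^b V) →ₗ[k] ⨂[k]^d V) →ₗ[k]
      (⨂[k]^(a+b) V) →ₗ[k] ⨂[k]^(c+d) V :=
  (TensorProduct.mapBilinear (RingHom.id k) _ _ _ _).compr₂
    (LinearEquiv.arrowCongr (mulPow k V a b) (mulPow k V c d)).toLinearMap

theorem tmap_sub_left {a b c d : ℕ} (f f' : (⨂[k]^a V) →ₗ[k] ⨂[k]^c V)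
    (g : (⨂[k]^b V) →ₗ[k] ⨂[k]^d V) : tmap (f - f') g = tmap f g - tmap f' g :=
  LinearMap.map_sub₂ (tmapBilinear k V a b c d) f f' g

theorem tmap_sub_right {a b c d : ℕ} (f : (⨂[k]^a V) →ₗ[k] ⨂[k]^c V)
    (g g' : (⨂[k]^b V) →ₗ[k] ⨂[k]^d V) : tmap f (g - g') = tmap f g - tmap f g' :=
  map_sub (tmapBilinear k V a b c d f) g g'

theorem tmap_mulPow_tmul {a b c d : ℕ} (f : (⨂[k]^a V) →ₗ[k] ⨂[k]^c V)
    (g : (⨂[k]^b V) →ₗ[k] ⨂[k]^d V) (x : ⨂[k]^a V) (y : ⨂[k]^b V) :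
    tmap f g (mulPow k V a b (x ⊗ₜ y)) = mulPow k V c d (f x ⊗ₜ g y) := by
  simp [tmap]

theorem pmap_id (n : ℕ) : pmap (LinearMap.id : V →ₗ[k] V) n = LinearMap.id :=
  PiTensorProduct.map_id

theorem tmap_id_id (a b : ℕ) :
    tmap (LinearMap.id : (⨂[k]^a V) →ₗ[k] _) (LinearMap.id : (⨂[k]^b V) →ₗ[k] _) =
      LinearMap.id := by
  ext x
  simp [tmap]

theorem mulPow_tmul_one {a : ℕ} (x : ⨂[k]^a V) :
    mulPow k V a 0 (x ⊗ₜ tprod k Fin.elim0) = x := by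
  simpa [TensorPower.gMul_def, TensorPower.gOne_def] using TensorPower.mul_one x

theorem mulPow_tmul_mulPow {a b c : ℕ} (x : ⨂[k]^a V) (y : ⨂[k]^b V) (z : ⨂[k]^c V) :
    mulPow k V a (b+c) (x ⊗ₜ mulPow k V b c (y ⊗ₜ z)) =
      TensorPower.cast k V (Nat.add_assoc a b c)
        (mulPow k V (a+b) c (mulPow k V a b (x ⊗ₜ y) ⊗ₜ z)) :=
  (TensorPower.mul_assoc x y z).symm

theorem ext_mulPow {a b : ℕ} {W : Type*} [AddCommGroup W] [Module k W]
    {F G : (⨂[k]^(a+b) V) →ₗ[k] W}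
    (h : ∀ x y, F (mulPow k V a b (x ⊗ₜ y)) = G (mulPow k V a b (x ⊗ₜ y))) : F = G :=
  (LinearEquiv.eq_comp_toLinearMap_iff _ _).mp (TensorProduct.ext' h)

theorem ext_mulPow_mulPow {a b c : ℕ} {W : Type*} [AddCommGroup W] [Module k W]
    {F G : (⨂[k]^(a+(b+c)) V) →ₗ[k] W}
    (h : ∀ x y z, F (mulPow k V a (b+c) (x ⊗ₜ mulPow k V b c (y ⊗ₜ z))) =
      G (mulPow k V a (b+c) (x ⊗ₜ mulPow k V b c (y ⊗ₜ z)))) : F = G :=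
  ext_mulPow fun x _ => LinearMap.congr_fun
    (ext_mulPow (F := F ∘ₗ (mulPow k V a (b+c)).toLinearMap ∘ₗ TensorProduct.mk k _ _ x)
      (G := G ∘ₗ (mulPow k V a (b+c)).toLinearMap ∘ₗ TensorProduct.mk k _ _ x) (h x)) _

theorem tmap_tmap {a b c d e f : ℕ} (F : (⨂[k]^a V) →ₗ[k] ⨂[k]^d V)
    (G : (⨂[k]^b V) →ₗ[k] ⨂[k]^e V) (H : (⨂[k]^c V) →ₗ[k] ⨂[k]^f V) :
    conv (Nat.add_assoc a b c) (Nat.add_assoc d e f) (tmap (tmap F G) H) =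
      tmap F (tmap G H) := by
  refine ext_mulPow_mulPow fun x y z => ?_
  rw [tmap_mulPow_tmul, tmap_mulPow_tmul, mulPow_tmul_mulPow]
  simp [conv, tmap_mulPow_tmul, mulPow_tmul_mulPow]

variable (k V) in
noncomputable def rTensorHom (a c : ℕ) :
    ((⨂[k]^a V) →ₗ[k] ⨂[k]^c V) →ₗ[k] (⨂[k]^(a+1) V) →ₗ[k] ⨂[k]^(c+1) V :=
  (tmapBilinear k V a 1 c 1).flip (pmap LinearMap.id 1)

theorem rTensorHom_apply {a c : ℕ} (f : (⨂[k]^a V) →ₗ[k] ⨂[k]^c V) :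
    rTensorHom k V a c f = tmap f (pmap LinearMap.id 1) :=
  rfl

theorem tmap_pmap_id_zero {a c : ℕ} (f : (⨂[k]^a V) →ₗ[k] ⨂[k]^c V) :
    tmap f (pmap LinearMap.id 0) = f := by
  refine LinearMap.ext fun x => ?_
  calc tmap f (pmap LinearMap.id 0) x
      = tmap f (pmap LinearMap.id 0) (mulPow k V a 0 (x ⊗ₜ tprod k Fin.elim0)) := by
        rw [mulPow_tmul_one]
    _ = f x := by rw [tmap_mulPow_tmul, pmap_id, LinearMap.id_apply, mulPow_tmul_one]

theorem tmap_tmap_pmap_id {a c : ℕ} (f : (⨂[k]^a V) →ₗ[k] ⨂[k]^c V) (j : ℕ) :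
    tmap (tmap f (pmap LinearMap.id j)) (pmap LinearMap.id 1) =
      tmap f (pmap LinearMap.id (j+1)) := by
  simpa [pmap_id, tmap_id_id, conv_refl] using
    tmap_tmap f (pmap LinearMap.id j) (pmap LinearMap.id 1)

theorem conv_tmap_pmap_id_succ {a c A B j : ℕ} (f : (⨂[k]^a V) →ₗ[k] ⨂[k]^c V)
    (h1 : a + (j+1) = A+1) (h2 : c + (j+1) = B+1) (h1' : a + j = A) (h2' : c + j = B) :
    conv h1 h2 (tmap f (pmap LinearMap.id (j+1))) =
      rTensorHom k V A B (conv h1' h2' (tmap f (pmap LinearMap.id j))) := by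
  subst h1' h2'
  rw [conv_refl, conv_refl, rTensorHom_apply, tmap_tmap_pmap_id]

section

variable (D : (m : ℕ) → (⨂[k]^m V) →ₗ[k] ⨂[k]^(m+1) V)

/-- The index `m` is a separate argument rather than `i - j`, so that `simp` can rewrite it:
only the proof `h` depends on it. -/
noncomputable def padded {i : ℕ} (m j : ℕ) (h : m + j = i) : (⨂[k]^i V) →ₗ[k] ⨂[k]^(i+1) V :=
  conv h (by omega) (tmap (D m) (pmap LinearMap.id j))

noncomputable def sigmaPadded (s : V →ₗ[k] V) {i : ℕ} (m j : ℕ) (h : 1 + m + j = i) :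
    (⨂[k]^i V) →ₗ[k] ⨂[k]^(i+1) V :=
  conv h (by omega) (tmap (tmap (pmap s 1) (D m)) (pmap LinearMap.id j))

theorem padded_zero (i : ℕ) (h : i + 0 = i) : padded D i 0 h = D i := by
  rw [padded, tmap_pmap_id_zero, conv_refl]

theorem padded_succ {i m j : ℕ} (h : m + (j+1) = i+1) :
    padded D m (j+1) h = rTensorHom k V i (i+1) (padded D m j (by omega)) :=
  conv_tmap_pmap_id_succ _ _ _ _ _

theorem sigmaPadded_zero (s : V →ₗ[k] V) {i m : ℕ} (h : 1 + m + 0 = i) :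
    sigmaPadded D s m 0 h =
      conv (by omega : 1 + m = i) (by omega : 1 + (m + 1) = i + 1) (tmap (pmap s 1) (D m)) := by
  rw [sigmaPadded, tmap_pmap_id_zero]

theorem sigmaPadded_succ (s : V →ₗ[k] V) {i m j : ℕ} (h : 1 + m + (j+1) = i+1) :
    sigmaPadded D s m (j+1) h = rTensorHom k V i (i+1) (sigmaPadded D s m j (by omega)) :=
  conv_tmap_pmap_id_succ _ _ _ _ _

noncomputable def paddedAltSum (i : ℕ) : (⨂[k]^i V) →ₗ[k] ⨂[k]^(i+1) V :=
  ∑ j : Fin i, (-1 : k)^(j : ℕ) • padded D (i - j) j (by omega)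

noncomputable def sigmaPaddedAltSum (s : V →ₗ[k] V) (i : ℕ) : (⨂[k]^i V) →ₗ[k] ⨂[k]^(i+1) V :=
  ∑ j : Fin (i-1), (-1 : k)^((j : ℕ)+1) • sigmaPadded D s (i - (j+1)) j (by omega)

theorem paddedAltSum_one : paddedAltSum D 1 = D 1 := by
  simp [paddedAltSum, padded_zero]

theorem paddedAltSum_succ (n : ℕ) :
    paddedAltSum D (n+2) = D (n+2) - rTensorHom k V (n+1) (n+2) (paddedAltSum D (n+1)) := by
  rw [paddedAltSum, Fin.sum_univ_succ, paddedAltSum, map_sum, sub_eq_add_neg,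
    ← Finset.sum_neg_distrib]
  simp only [Fin.val_zero, pow_zero, one_smul, Nat.sub_zero, padded_zero, Fin.val_succ]
  congr 1
  refine Finset.sum_congr rfl fun j _ => ?_
  rw [padded_succ, map_smul, pow_succ]
  simp only [show n + 2 - (j + 1) = n + 1 - j by omega]
  module

theorem sigmaPaddedAltSum_one (s : V →ₗ[k] V) : sigmaPaddedAltSum D s 1 = 0 := by
  simp [sigmaPaddedAltSum]

theorem sigmaPaddedAltSum_succ (s : V →ₗ[k] V) (n : ℕ) :
    sigmaPaddedAltSum D s (n+2) =
      -conv (by omega : 1 + (n + 1) = n + 2) (by omega : 1 + (n + 2) = n + 3)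
          (tmap (pmap s 1) (D (n+1)))
        - rTensorHom k V (n+1) (n+2) (sigmaPaddedAltSum D s (n+1)) := by
  rw [sigmaPaddedAltSum]
  change ∑ j : Fin (n + 1), _ = _
  rw [Fin.sum_univ_succ, sigmaPaddedAltSum, map_sum, sub_eq_add_neg,
    ← Finset.sum_neg_distrib]
  simp only [Fin.val_zero, zero_add, pow_one, sigmaPadded_zero, Fin.val_succ]
  congr 1
  refine Finset.sum_congr rfl fun j _ => ?_
  rw [sigmaPadded_succ, map_smul, pow_succ]
  simp only [show n + 2 - (j + 1 + 1) = n + 1 - (j + 1) by omega]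
  module

end

theorem SeqPairRec.sub {σ : V ≃ₗ[k] V}
    {δr δl δr' δl' : (i : ℕ) → (⨂[k]^i V) →ₗ[k] ⨂[k]^(i+1) V}
    (h : SeqPairRec σ δr δl) (h' : SeqPairRec σ δr' δl') :
    SeqPairRec σ (δr - δr') (δl - δl') := by
  refine ⟨by rw [Pi.sub_apply, Pi.sub_apply, h.1, h'.1], fun i hi => ?_⟩
  simp only [Pi.sub_apply, tmap_sub_left, tmap_sub_right, conv_sub]
  linear_combination (norm := module) h.2 i hi - h'.2 i hi

theorem SeqPairRec.succ_succ {σ : V ≃ₗ[k] V}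
    {D E : (i : ℕ) → (⨂[k]^i V) →ₗ[k] ⨂[k]^(i+1) V} (h : SeqPairRec σ D E) (n : ℕ) :
    D (n+2) + (-1 : k)^(n+2) • E (n+2) =
      conv (by omega : 1 + (n + 1) = n + 2) (by omega : 1 + (n + 2) = n + 3)
          (tmap (pmap σ.toLinearMap 1) (D (n+1)))
        + (-1 : k)^(n+2) • rTensorHom k V (n+1) (n+2) (E (n+1)) := by
  have := h.2 (n+2) (by omega)
  rwa [conv_refl] at this

theorem SeqPairRec.paddedAltSum_add_sigmaPaddedAltSum {σ : V ≃ₗ[k] V}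
    {D E : (i : ℕ) → (⨂[k]^i V) →ₗ[k] ⨂[k]^(i+1) V} (h : SeqPairRec σ D E) (n : ℕ) :
    paddedAltSum D (n+1) + sigmaPaddedAltSum D σ.toLinearMap (n+1) =
      (-1 : k)^(n+2) • E (n+1) := by
  induction n with
  | zero => simp [paddedAltSum_one, sigmaPaddedAltSum_one, h.1]
  | succ n ih =>
    have hrec := h.succ_succ n
    have ih' := congrArg (rTensorHom k V (n+1) (n+2)) ih
    rw [map_add, map_smul] at ih'
    rw [paddedAltSum_succ, sigmaPaddedAltSum_succ]
    linear_combination (norm := module) hrec - ih'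

/-- **Proposition 2.5(b)** (algebraic core): if `(δ_{i,r}, δ_{i,l})` and `(δ'_{i,r}, δ'_{i,l})`
both satisfy the sequence-pair recurrence for `σ`, then for every `i ≥ 1`,
`∑_{j=0}^{i−1} (−1)^j ((δ_{i−j,r} − δ'_{i−j,r}) ⊗ id_V^{⊗j})
  = (−1)^{i+1} (δ_{i,l} − δ'_{i,l}) − ∑_{j=1}^{i−1} (−1)^j (σ ⊗ (δ_{i−j,r} − δ'_{i−j,r}) ⊗ id_V^{⊗(j−1)})`
as linear maps `V^{⊗i} → V^{⊗(i+1)}`. -/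
theorem prop_2_5_b (σ : V ≃ₗ[k] V)
    (δr δl δr' δl' : (i : ℕ) → (⨂[k]^i V) →ₗ[k] ⨂[k]^(i+1) V)
    (hpair : SeqPairRec σ δr δl) (hpair' : SeqPairRec σ δr' δl')
    (i : ℕ) (hi : 1 ≤ i) :
    (∑ j : Fin i, ((-1 : k)^((j : ℕ))) •
        conv (a' := i) (b' := i+1) (by have := j.isLt; omega) (by have := j.isLt; omega)
          (tmap (δr (i - (j : ℕ)) - δr' (i - (j : ℕ))) (pmap (LinearMap.id) (j : ℕ))))
    = ((-1 : k)^(i+1)) • (δl i - δl' i)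
      - ∑ j : Fin (i-1), ((-1 : k)^((j : ℕ)+1)) •
          conv (a' := i) (b' := i+1) (by have := j.isLt; omega) (by have := j.isLt; omega)
            (tmap (tmap (pmap σ.toLinearMap 1)
                (δr (i - ((j : ℕ)+1)) - δr' (i - ((j : ℕ)+1))))
              (pmap (LinearMap.id) (j : ℕ))) := by
  obtain ⟨n, rfl⟩ : ∃ n, i = n + 1 := ⟨i - 1, by omega⟩
  rw [eq_sub_iff_add_eq]
  exact (hpair.sub hpair').paddedAltSum_add_sigmaPaddedAltSum n

end OrePaper
end

section
/- Suppose σ(x_1) = m_{11} x_1 + m_{12} x_2 and σ(x_2) = m_{11} x_2 with m_{11} ≠ 0, and let r = x_1⊗x_2 − x_2⊗x_1 − x_2⊗x_2 ∈ V⊗V. Then D(r) ∈ r⊗V + V⊗r if and only if the following four equations hold: (m_{11}−1)γ_{21} = 0; (m_{11}−1)γ_{11} + (m_{11}−m_{12}+1)γ_{21} + (1−m_{11})γ_{22} = 0; −(m_{11}+1)γ_{11} + (m_{11}−1)γ_{12} + (1−m_{11}+m_{12})γ_{21} + (m_{11}−m_{12})γ_{22} + (1−m_{11})γ_{23} = 0;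 −2γ_{11} − γ_{12} + (m_{11}−1)γ_{13} + 2γ_{21} + γ_{22} + (1−m_{11}−m_{12})γ_{23} = 0. In that case, D(r) = r⊗δ_r + δ_l⊗r with δ_r = (m_{11}γ_{11} + (m_{11}−m_{12})γ_{21} + γ_{22}) x_1 + (γ_{11} − γ_{21} + m_{11}γ_{23}) x_2 and δ_l = (γ_{11} − γ_{21}) x_1 + (γ_{11} + γ_{12} − γ_{21} − γ_{22} + m_{11}γ_{23}) x_2. -/
open scoped TensorProduct

namespace OrePaper

/-!
In the basis `xᵢ ⊗ xⱼ ⊗ xₗ` of `V^{⊗3}`, with `c = c₀x₁ + c₁x₂` and `c' = d₀x₁ + d₁x₂`, the element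
`r ⊗ c + c' ⊗ r` has coordinates `(0, d₀, c₀ - d₀, c₁ - d₀, -c₀, d₁ - c₁, -c₀ - d₁, -c₁ - d₁)`.
Eliminating `c₀, c₁, d₀, d₁` shows that `r ⊗ V + V ⊗ r` is cut out by four linear equations in the
coordinates, and on the coordinates of `D r`, computed directly from `σ` and `δ`, these are the
four equations of the statement. Conversely, when they hold, `c = δ_r` and `c' = δ_l` match all
eight coordinates of `D r`.
-/

open TensorProduct Module

noncomputable section

variable {k V : Type*} [CommRing k] [AddCommGroup V] [Module k V]

/-- `r ⊗ V + V ⊗ r`, the degree-three part of the two-sided ideal of `T(V)` generated by `r`. -/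
def idealDegThree (r : V ⊗[k] V) : Submodule k (V ⊗[k] (V ⊗[k] V)) :=
  LinearMap.range ((TensorProduct.assoc k V V V).toLinearMap ∘ₗ mk k (V ⊗[k] V) V r)
    ⊔ LinearMap.range ((mk k V (V ⊗[k] V)).flip r)

theorem mem_idealDegThree_iff {r : V ⊗[k] V} {t : V ⊗[k] (V ⊗[k] V)} :
    t ∈ idealDegThree r ↔ ∃ c c' : V, t = TensorProduct.assoc k V V V (r ⊗ₜ c) + c' ⊗ₜ r := by
  simp only [idealDegThree, Submodule.mem_sup, LinearMap.mem_range]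
  constructor
  · rintro ⟨_, ⟨c, rfl⟩, _, ⟨c', rfl⟩, rfl⟩
    exact ⟨c, c', rfl⟩
  · rintro ⟨c, c', rfl⟩
    exact ⟨_, ⟨c, rfl⟩, _, ⟨c', rfl⟩, rfl⟩

/-- `σ ⊗ δ + δ ⊗ id`, the degree-two component of the `σ`-derivation of `T(V)` extending `δ`. -/
def twistedDerivTwo (σ : V →ₗ[k] V) (δ : V →ₗ[k] V ⊗[k] V) :
    V ⊗[k] V →ₗ[k] V ⊗[k] (V ⊗[k] V) :=
  map σ δ + (TensorProduct.assoc k V V V).toLinearMap ∘ₗ map δ LinearMap.id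

variable (b : Basis (Fin 2) k V)

def coords (t : V ⊗[k] (V ⊗[k] V)) (i j l : Fin 2) : k :=
  (b.tensorProduct (b.tensorProduct b)).repr t (i, j, l)

theorem coords_injective : Function.Injective (coords b) := fun _ _ h =>
  (b.tensorProduct (b.tensorProduct b)).ext_elem fun ⟨i, j, l⟩ =>
    congrFun (congrFun (congrFun h i) j) l

def jordanRel : V ⊗[k] V := b 0 ⊗ₜ b 1 - b 1 ⊗ₜ b 0 - b 1 ⊗ₜ b 1

theorem coords_assoc_jordanRel_tmul_add (c c' : V) :
    coords b (TensorProduct.assoc k V V V (jordanRel b ⊗ₜ c) + c' ⊗ₜ jordanRel b) =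
      let c₀ := b.repr c 0; let c₁ := b.repr c 1; let d₀ := b.repr c' 0; let d₁ := b.repr c' 1
      ![![![0, d₀], ![c₀ - d₀, c₁ - d₀]], ![![-c₀, d₁ - c₁], ![-c₀ - d₁, -c₁ - d₁]]] := by
  funext i j l
  simp only [coords, jordanRel, sub_tmul, map_add, map_sub, assoc_tmul, tmul_sub,
    Basis.tensorProduct_repr_tmul_apply, Basis.repr_self, Finsupp.add_apply, Finsupp.sub_apply,
    smul_eq_mul]
  fin_cases i <;> fin_cases j <;> fin_cases l <;> simp <;> ring

variable {σ : V →ₗ[k] V} {δ : V →ₗ[k] V ⊗[k] V} {m₁₁ m₁₂ γ₁₁ γ₁₂ γ₁₃ γ₂₁ γ₂₂ γ₂₃ : k}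

theorem coords_twistedDerivTwo_jordanRel
    (hσ₀ : σ (b 0) = m₁₁ • b 0 + m₁₂ • b 1) (hσ₁ : σ (b 1) = m₁₁ • b 1)
    (hδ₀ : δ (b 0) = γ₁₁ • (b 0 ⊗ₜ b 0) + γ₁₂ • (b 1 ⊗ₜ b 0) + γ₁₃ • (b 1 ⊗ₜ b 1))
    (hδ₁ : δ (b 1) = γ₂₁ • (b 0 ⊗ₜ b 0) + γ₂₂ • (b 1 ⊗ₜ b 0) + γ₂₃ • (b 1 ⊗ₜ b 1)) :
    coords b (twistedDerivTwo σ δ (jordanRel b)) =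
      ![![![(m₁₁ - 1) * γ₂₁, γ₁₁ - γ₂₁], ![m₁₁ * γ₂₂, m₁₁ * γ₂₃]],
        ![![(m₁₂ - m₁₁) * γ₂₁ - m₁₁ * γ₁₁ - γ₂₂, γ₁₂ - γ₂₂],
          ![(m₁₂ - m₁₁) * γ₂₂ - m₁₁ * γ₁₂ - γ₂₃, (m₁₂ - m₁₁) * γ₂₃ - m₁₁ * γ₁₃ + γ₁₃ - γ₂₃]]] := by
  funext i j l
  simp only [coords, twistedDerivTwo, jordanRel, LinearMap.add_apply, LinearMap.comp_apply,
    LinearEquiv.coe_coe, map_sub, map_tmul, hσ₀, hσ₁, hδ₀, hδ₁, LinearMap.id_apply, add_tmul,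
    tmul_add, smul_tmul', map_add, map_smul, assoc_tmul, Basis.tensorProduct_repr_tmul_apply,
    Basis.repr_self, Finsupp.add_apply, Finsupp.sub_apply, Finsupp.smul_apply, smul_eq_mul]
  fin_cases i <;> fin_cases j <;> fin_cases l <;> simp <;> ring

variable (m₁₁ m₁₂ γ₁₁ γ₁₂ γ₁₃ γ₂₁ γ₂₂ γ₂₃) in
def JordanOreConditions : Prop :=
  (m₁₁ - 1) * γ₂₁ = 0
    ∧ (m₁₁ - 1) * γ₁₁ + (m₁₁ - m₁₂ + 1) * γ₂₁ + (1 - m₁₁) * γ₂₂ = 0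
    ∧ -(m₁₁ + 1) * γ₁₁ + (m₁₁ - 1) * γ₁₂ + (1 - m₁₁ + m₁₂) * γ₂₁
        + (m₁₁ - m₁₂) * γ₂₂ + (1 - m₁₁) * γ₂₃ = 0
    ∧ -(2 * γ₁₁) - γ₁₂ + (m₁₁ - 1) * γ₁₃ + 2 * γ₂₁ + γ₂₂ + (1 - m₁₁ - m₁₂) * γ₂₃ = 0

theorem twistedDerivTwo_jordanRel_eq
    (hσ₀ : σ (b 0) = m₁₁ • b 0 + m₁₂ • b 1) (hσ₁ : σ (b 1) = m₁₁ • b 1)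
    (hδ₀ : δ (b 0) = γ₁₁ • (b 0 ⊗ₜ b 0) + γ₁₂ • (b 1 ⊗ₜ b 0) + γ₁₃ • (b 1 ⊗ₜ b 1))
    (hδ₁ : δ (b 1) = γ₂₁ • (b 0 ⊗ₜ b 0) + γ₂₂ • (b 1 ⊗ₜ b 0) + γ₂₃ • (b 1 ⊗ₜ b 1))
    (h : JordanOreConditions m₁₁ m₁₂ γ₁₁ γ₁₂ γ₁₃ γ₂₁ γ₂₂ γ₂₃) :
    twistedDerivTwo σ δ (jordanRel b) = TensorProduct.assoc k V V V (jordanRel b ⊗ₜ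
        ((m₁₁ * γ₁₁ + (m₁₁ - m₁₂) * γ₂₁ + γ₂₂) • b 0 + (γ₁₁ - γ₂₁ + m₁₁ * γ₂₃) • b 1))
      + ((γ₁₁ - γ₂₁) • b 0 + (γ₁₁ + γ₁₂ - γ₂₁ - γ₂₂ + m₁₁ * γ₂₃) • b 1) ⊗ₜ jordanRel b := by
  obtain ⟨h₁, h₂, h₃, h₄⟩ := h
  apply coords_injective b
  rw [coords_twistedDerivTwo_jordanRel b hσ₀ hσ₁ hδ₀ hδ₁, coords_assoc_jordanRel_tmul_add]
  simp only [Matrix.vecCons_inj, and_true, map_add, map_smul, Finsupp.add_apply,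
    Finsupp.smul_apply, Basis.repr_self_apply, smul_eq_mul, one_ne_zero, zero_ne_one, ↓reduceIte]
  exact ⟨⟨⟨h₁, by ring⟩, by linear_combination -h₂, by ring⟩, ⟨by ring, by ring⟩,
    by linear_combination -h₃, by linear_combination -h₄⟩

theorem twistedDerivTwo_jordanRel_mem_idealDegThree_iff
    (hσ₀ : σ (b 0) = m₁₁ • b 0 + m₁₂ • b 1) (hσ₁ : σ (b 1) = m₁₁ • b 1)
    (hδ₀ : δ (b 0) = γ₁₁ • (b 0 ⊗ₜ b 0) + γ₁₂ • (b 1 ⊗ₜ b 0) + γ₁₃ • (b 1 ⊗ₜ b 1))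
    (hδ₁ : δ (b 1) = γ₂₁ • (b 0 ⊗ₜ b 0) + γ₂₂ • (b 1 ⊗ₜ b 0) + γ₂₃ • (b 1 ⊗ₜ b 1)) :
    twistedDerivTwo σ δ (jordanRel b) ∈ idealDegThree (jordanRel b) ↔
      JordanOreConditions m₁₁ m₁₂ γ₁₁ γ₁₂ γ₁₃ γ₂₁ γ₂₂ γ₂₃ := by
  refine mem_idealDegThree_iff.trans
    ⟨fun ⟨c, c', h⟩ => ?_, fun h => ⟨_, _, twistedDerivTwo_jordanRel_eq b hσ₀ hσ₁ hδ₀ hδ₁ h⟩⟩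
  have hcoords := congrArg (coords b) h
  rw [coords_twistedDerivTwo_jordanRel b hσ₀ hσ₁ hδ₀ hδ₁, coords_assoc_jordanRel_tmul_add]
    at hcoords
  simp only [Matrix.vecCons_inj, and_true] at hcoords
  obtain ⟨⟨⟨e₀₀₀, e₀₀₁⟩, e₀₁₀, e₀₁₁⟩, ⟨e₁₀₀, e₁₀₁⟩, e₁₁₀, e₁₁₁⟩ := hcoords
  exact ⟨e₀₀₀, by linear_combination -(e₀₀₁ + e₀₁₀ + e₁₀₀),
    by linear_combination -(e₀₀₁ + e₀₁₁ - e₁₀₀ + e₁₀₁ + e₁₁₀),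
    by linear_combination -(2 * e₀₀₁ + 2 * e₀₁₁ + e₁₀₁ + e₁₁₁)⟩

end

theorem lemma_jordan_plane_general {k : Type*} [Field k]
    {V : Type*} [AddCommGroup V] [Module k V]
    (b : Module.Basis (Fin 2) k V)
    (σ : V →ₗ[k] V) (δ : V →ₗ[k] V ⊗[k] V)
    (m11 m12 : k) (γ11 γ12 γ13 γ21 γ22 γ23 : k)
    (hσ1 : σ (b 0) = m11 • b 0 + m12 • b 1)
    (hσ2 : σ (b 1) = m11 • b 1)
    (hδ1 : δ (b 0) = γ11 • (b 0 ⊗ₜ[k] b 0) + γ12 • (b 1 ⊗ₜ[k] b 0) + γ13 • (b 1 ⊗ₜ[k] b 1))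
    (hδ2 : δ (b 1) = γ21 • (b 0 ⊗ₜ[k] b 0) + γ22 • (b 1 ⊗ₜ[k] b 0) + γ23 • (b 1 ⊗ₜ[k] b 1))
    (D : V ⊗[k] V →ₗ[k] V ⊗[k] (V ⊗[k] V))
    (hD : D = TensorProduct.map σ δ
        + (TensorProduct.assoc k V V V).toLinearMap ∘ₗ TensorProduct.map δ LinearMap.id)
    (r : V ⊗[k] V) (hr : r = b 0 ⊗ₜ[k] b 1 - b 1 ⊗ₜ[k] b 0 - b 1 ⊗ₜ[k] b 1) :
    (D r ∈ LinearMap.range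
          ((TensorProduct.assoc k V V V).toLinearMap ∘ₗ TensorProduct.mk k (V ⊗[k] V) V r)
        ⊔ LinearMap.range ((TensorProduct.mk k V (V ⊗[k] V)).flip r)
      ↔ ((m11 - 1) * γ21 = 0
        ∧ (m11 - 1) * γ11 + (m11 - m12 + 1) * γ21 + (1 - m11) * γ22 = 0
        ∧ -(m11 + 1) * γ11 + (m11 - 1) * γ12 + (1 - m11 + m12) * γ21
            + (m11 - m12) * γ22 + (1 - m11) * γ23 = 0
        ∧ -(2 * γ11) - γ12 + (m11 - 1) * γ13 + 2 * γ21 + γ22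
            + (1 - m11 - m12) * γ23 = 0))
    ∧ (((m11 - 1) * γ21 = 0
        ∧ (m11 - 1) * γ11 + (m11 - m12 + 1) * γ21 + (1 - m11) * γ22 = 0
        ∧ -(m11 + 1) * γ11 + (m11 - 1) * γ12 + (1 - m11 + m12) * γ21
            + (m11 - m12) * γ22 + (1 - m11) * γ23 = 0
        ∧ -(2 * γ11) - γ12 + (m11 - 1) * γ13 + 2 * γ21 + γ22
            + (1 - m11 - m12) * γ23 = 0) →
        D r = (TensorProduct.assoc k V V V) (r ⊗ₜ[k] ((m11 * γ11 + (m11 - m12) * γ21 + γ22) • b 0 + (γ11 - γ21 + m11 * γ23) • b 1))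
            + ((γ11 - γ21) • b 0 + (γ11 + γ12 - γ21 - γ22 + m11 * γ23) • b 1) ⊗ₜ[k] r) := by
  obtain rfl : D = twistedDerivTwo σ δ := hD
  obtain rfl : r = jordanRel b := hr
  exact ⟨twistedDerivTwo_jordanRel_mem_idealDegThree_iff b hσ1 hσ2 hδ1 hδ2,
    twistedDerivTwo_jordanRel_eq b hσ1 hσ2 hδ1 hδ2⟩

/-- The lemma in Case (iii) of Section 4.2: Jordan plane `k⟨x₁,x₂⟩/(x₁x₂ − x₂x₁ − x₂²)` with upper-triangular graded automorphism. -/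
theorem lemma_jordan_plane {k : Type*} [Field k] [CharZero k]
    {V : Type*} [AddCommGroup V] [Module k V]
    (b : Module.Basis (Fin 2) k V)
    (σ : V →ₗ[k] V) (δ : V →ₗ[k] V ⊗[k] V)
    (m11 m12 : k) (γ11 γ12 γ13 γ21 γ22 γ23 : k)
    (hσ1 : σ (b 0) = m11 • b 0 + m12 • b 1)
    (hσ2 : σ (b 1) = m11 • b 1)
    (hdet : m11 ≠ 0)
    (hδ1 : δ (b 0) = γ11 • (b 0 ⊗ₜ[k] b 0) + γ12 • (b 1 ⊗ₜ[k] b 0) + γ13 • (b 1 ⊗ₜ[k] b 1))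
    (hδ2 : δ (b 1) = γ21 • (b 0 ⊗ₜ[k] b 0) + γ22 • (b 1 ⊗ₜ[k] b 0) + γ23 • (b 1 ⊗ₜ[k] b 1))
    (D : V ⊗[k] V →ₗ[k] V ⊗[k] (V ⊗[k] V))
    (hD : D = TensorProduct.map σ δ
        + (TensorProduct.assoc k V V V).toLinearMap ∘ₗ TensorProduct.map δ LinearMap.id)
    (r : V ⊗[k] V) (hr : r = b 0 ⊗ₜ[k] b 1 - b 1 ⊗ₜ[k] b 0 - b 1 ⊗ₜ[k] b 1) :
    (D r ∈ LinearMap.range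
          ((TensorProduct.assoc k V V V).toLinearMap ∘ₗ TensorProduct.mk k (V ⊗[k] V) V r)
        ⊔ LinearMap.range ((TensorProduct.mk k V (V ⊗[k] V)).flip r)
      ↔ ((m11 - 1) * γ21 = 0
        ∧ (m11 - 1) * γ11 + (m11 - m12 + 1) * γ21 + (1 - m11) * γ22 = 0
        ∧ -(m11 + 1) * γ11 + (m11 - 1) * γ12 + (1 - m11 + m12) * γ21
            + (m11 - m12) * γ22 + (1 - m11) * γ23 = 0
        ∧ -(2 * γ11) - γ12 + (m11 - 1) * γ13 + 2 * γ21 + γ22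
            + (1 - m11 - m12) * γ23 = 0))
    ∧ (((m11 - 1) * γ21 = 0
        ∧ (m11 - 1) * γ11 + (m11 - m12 + 1) * γ21 + (1 - m11) * γ22 = 0
        ∧ -(m11 + 1) * γ11 + (m11 - 1) * γ12 + (1 - m11 + m12) * γ21
            + (m11 - m12) * γ22 + (1 - m11) * γ23 = 0
        ∧ -(2 * γ11) - γ12 + (m11 - 1) * γ13 + 2 * γ21 + γ22
            + (1 - m11 - m12) * γ23 = 0) →
        D r = (TensorProduct.assoc k V V V) (r ⊗ₜ[k] ((m11 * γ11 + (m11 - m12) * γ21 + γ22) • b 0 + (γ11 - γ21 + m11 * γ23) • b 1))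
            + ((γ11 - γ21) • b 0 + (γ11 + γ12 - γ21 - γ22 + m11 * γ23) • b 1) ⊗ₜ[k] r) :=
  lemma_jordan_plane_general b σ δ m11 m12 γ11 γ12 γ13 γ21 γ22 γ23 hσ1 hσ2 hδ1 hδ2 D hD r hr

end OrePaper
end
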